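/- Let Σ_x be a q×q symmetric matrix with vᵀΣ_x v ≥ (1/M₁)‖v‖₂² for all v, and let S be a symmetric matrix such that |vᵀ(S − Σ_x)v| ≤ 1/(L M₁) for every 2s-sparse unit vector v, with L > 27. Then S satisfies the lower-RE condition vᵀSv ≥ α‖v‖₂² − ζ‖v‖₁² for all v ∈ ℝ^q, with α = (1/M₁)(1 − 27/L) and ζ = 27/(s M₁ L). -/

import Mathlib

/-!
Write `Δ = S - Sx`. Sort the coordinates of `v` by decreasing magnitude and cut them into
consecutive blocks of `s`; every entry of a block is at most the average magnitude of the
previous block, so the `ℓ²` norms of the blocks after the first sum to at most `‖v‖₁ / √s`.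
Polarization turns the bound on `2s`-sparse vectors into `|aᵀΔb + bᵀΔa| ≤ 2δ‖a‖‖b‖` for
`s`-sparse `a, b`, and expanding `vᵀΔv` over the blocks gives
`|vᵀΔv| ≤ δ (‖v‖₂ + ‖v‖₁ / √s)² ≤ 2δ (‖v‖₂² + ‖v‖₁² / s)` with `δ = 1/(L M₁)`.
As `2 ≤ 27`, the eigenvalue bound on `Sx` then gives the lower-RE condition.
-/

open Matrix Finset

theorem Finset.exists_subset_card_eq_forall_le {α β : Type*} [DecidableEq α] [LinearOrder β]
    (K : Finset α) (f : α → β) {n : ℕ} (hn : n ≤ #K) :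
    ∃ T ⊆ K, #T = n ∧ ∀ i ∈ T, ∀ j ∈ K \ T, f j ≤ f i := by
  induction n with
  | zero => exact ⟨∅, empty_subset K, rfl, by simp⟩
  | succ m ih =>
    obtain ⟨T, hTK, hTcard, hTtop⟩ := ih (Nat.le_of_succ_le hn)
    have hne : (K \ T).Nonempty := by
      rw [← card_pos, card_sdiff_of_subset hTK]
      omega
    obtain ⟨j₀, hj₀, hj₀max⟩ := exists_max_image (K \ T) f hne
    obtain ⟨hj₀K, hj₀T⟩ := mem_sdiff.mp hj₀
    refine ⟨insert j₀ T, insert_subset hj₀K hTK, by rw [card_insert_of_notMem hj₀T, hTcard], ?_⟩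
    intro i hi j hj
    have hj' : j ∈ K \ T := by simp_all
    rcases mem_insert.mp hi with rfl | hi
    · exact hj₀max j hj'
    · exact hTtop i hi j hj'

theorem sqrt_sum_sq_le_of_card_le {ι : Type*} {s : ℕ} {T : Finset ι} {v : ι → ℝ} {c : ℝ}
    (hc : 0 ≤ c) (hv : ∀ i ∈ T, |v i| ≤ c) (hT : #T ≤ s) : √(∑ i ∈ T, v i ^ 2) ≤ √s * c := by
  rw [← Real.sqrt_sq hc, ← Real.sqrt_mul (Nat.cast_nonneg s)]
  refine Real.sqrt_le_sqrt ?_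
  calc ∑ i ∈ T, v i ^ 2 ≤ ∑ _i ∈ T, c ^ 2 :=
        sum_le_sum fun i hi => sq_le_sq' (abs_le.mp (hv i hi)).1 (abs_le.mp (hv i hi)).2
    _ = #T * c ^ 2 := by rw [sum_const, nsmul_eq_mul]
    _ ≤ s * c ^ 2 := by gcongr

variable {ι : Type*} [Fintype ι]

theorem sum_sq_smul (c : ℝ) (v : ι → ℝ) : ∑ i, (c • v) i ^ 2 = c ^ 2 * ∑ i, v i ^ 2 := by
  simp only [Pi.smul_apply, smul_eq_mul, mul_pow, mul_sum]

theorem eq_zero_of_sum_sq_eq_zero {v : ι → ℝ} (h : ∑ i, v i ^ 2 = 0) : v = 0 := by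
  ext i
  simpa using (sum_eq_zero_iff_of_nonneg fun i _ => sq_nonneg (v i)).1 h i (mem_univ i)

def IsSparse (s : ℕ) (v : ι → ℝ) : Prop := #{i | v i ≠ 0} ≤ s

namespace IsSparse

variable {s t : ℕ} {u v w : ι → ℝ}

theorem of_support_subset (hv : IsSparse s v) (h : ∀ i, u i ≠ 0 → v i ≠ 0) : IsSparse s u :=
  (card_le_card fun _ hi => by simp_all).trans hv

theorem smul (hv : IsSparse s v) (c : ℝ) : IsSparse s (c • v) :=
  hv.of_support_subset fun _ hi => right_ne_zero_of_mul hi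

theorem add (hu : IsSparse s u) (hw : IsSparse t w) : IsSparse (s + t) (u + w) := by
  classical
  refine (card_le_card fun i hi => ?_).trans ((card_union_le _ _).trans (add_le_add hu hw))
  simp only [mem_filter, mem_univ, true_and, Pi.add_apply, mem_union] at hi ⊢
  by_contra! h
  simp [h.1, h.2] at hi

theorem sub (hu : IsSparse s u) (hw : IsSparse t w) : IsSparse (s + t) (u - w) := by
  simpa only [sub_eq_add_neg, neg_one_smul] using hu.add (hw.smul (-1))

theorem indicator {T : Finset ι} (hT : #T ≤ s) (v : ι → ℝ) :
    IsSparse s ((T : Set ι).indicator v) :=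
  (card_le_card fun i hi => by by_contra h; simp_all).trans hT

end IsSparse

/-- The `min` serves both uses: at the top level the first block is bounded by `‖v‖₂`,
in the recursion by `√s * c`. -/
theorem exists_sparse_decomposition [DecidableEq ι] {s : ℕ} (hs : 0 < s) (v : ι → ℝ)
    (K : Finset ι) {c : ℝ} (hc : 0 ≤ c) (hvc : ∀ i ∈ K, |v i| ≤ c) :
    ∃ (n : ℕ) (a : Fin n → ι → ℝ), (∀ k, IsSparse s (a k)) ∧ ∑ k, a k = (K : Set ι).indicator v ∧
      ∑ k, √(∑ i, a k i ^ 2) ≤ min (√s * c) √(∑ i ∈ K, v i ^ 2) + (∑ i ∈ K, |v i|) / √s := by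
  induction K using Finset.strongInduction generalizing c with | H K ih => ?_
  have hnorm (T : Finset ι) : ∑ i, (T : Set ι).indicator v i ^ 2 = ∑ i ∈ T, v i ^ 2 :=
    sum_indicator_subset_of_eq_zero v (fun _ x => x ^ 2) (subset_univ T) (by simp)
  rcases le_or_gt #K s with hK | hK
  · refine ⟨1, fun _ => (K : Set ι).indicator v, fun _ => IsSparse.indicator hK v, by simp, ?_⟩
    rw [Fin.sum_univ_one, hnorm]
    have := le_min (sqrt_sum_sq_le_of_card_le hc hvc hK) le_rfl
    have : 0 ≤ (∑ i ∈ K, |v i|) / √s := by positivity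
    linarith
  -- peel off the `s` largest entries; the rest is bounded by their average `c'`
  obtain ⟨T, hTK, hTcard, hTtop⟩ := K.exists_subset_card_eq_forall_le (fun i => |v i|) hK.le
  have hs' : (0 : ℝ) < s := by exact_mod_cast hs
  set c' := (∑ i ∈ T, |v i|) / s
  have hvc' : ∀ j ∈ K \ T, |v j| ≤ c' := fun j hj => by
    rw [le_div_iff₀ hs', mul_comm, ← hTcard, ← nsmul_eq_mul]
    exact card_nsmul_le_sum T _ _ fun i hi => hTtop i hi j hj
  obtain ⟨n, b, hb, hbsum, hbnorm⟩ :=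
    ih (K \ T) (sdiff_ssubset hTK (card_pos.mp (by omega))) (by positivity) hvc'
  refine ⟨n + 1, Fin.cons ((T : Set ι).indicator v) b,
    Fin.cases (IsSparse.indicator hTcard.le v) hb, ?_, ?_⟩
  · rw [Fin.sum_cons, hbsum]
    conv_rhs => rw [← union_sdiff_of_subset hTK, coe_union,
      Set.indicator_union_of_disjoint (disjoint_coe.2 disjoint_sdiff)]
    rfl
  · simp only [Fin.sum_univ_succ, Fin.cons_zero, Fin.cons_succ, hnorm]
    have hhead : √(∑ i ∈ T, v i ^ 2) ≤ min (√s * c) √(∑ i ∈ K, v i ^ 2) :=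
      le_min (sqrt_sum_sq_le_of_card_le hc (fun i hi => hvc i (hTK hi)) hTcard.le)
        (Real.sqrt_le_sqrt (sum_le_sum_of_subset_of_nonneg hTK fun _ _ _ => sq_nonneg _))
    have htail : √s * c' + (∑ i ∈ K \ T, |v i|) / √s = (∑ i ∈ K, |v i|) / √s := by
      rw [mul_div_left_comm, Real.sqrt_div_self', mul_one_div, ← add_div, add_comm,
        sum_sdiff hTK]
    linarith [min_le_left (√s * c') √(∑ i ∈ K \ T, v i ^ 2)]

theorem abs_dotProduct_mulVec_sum_le {κ : Type*} [Fintype κ] (Δ : Matrix ι ι ℝ) (δ : ℝ)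
    (a : κ → ι → ℝ) (N : κ → ℝ)
    (h : ∀ j k, |a j ⬝ᵥ Δ *ᵥ a k + a k ⬝ᵥ Δ *ᵥ a j| ≤ 2 * δ * (N j * N k)) :
    |(∑ k, a k) ⬝ᵥ Δ *ᵥ ∑ k, a k| ≤ δ * (∑ k, N k) ^ 2 := by
  have hexpand : 2 * ((∑ k, a k) ⬝ᵥ Δ *ᵥ ∑ k, a k)
      = ∑ j, ∑ k, (a j ⬝ᵥ Δ *ᵥ a k + a k ⬝ᵥ Δ *ᵥ a j) := by
    simp only [sum_add_distrib, mulVec_sum, dotProduct_sum, sum_dotProduct]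
    rw [sum_comm (f := fun j k => a k ⬝ᵥ Δ *ᵥ a j)]
    ring
  have hbound : |∑ j, ∑ k, (a j ⬝ᵥ Δ *ᵥ a k + a k ⬝ᵥ Δ *ᵥ a j)| ≤ 2 * (δ * (∑ k, N k) ^ 2) :=
    calc _ ≤ ∑ j, ∑ k, 2 * δ * (N j * N k) :=
          (abs_sum_le_sum_abs _ _).trans (sum_le_sum fun j _ =>
            (abs_sum_le_sum_abs _ _).trans (sum_le_sum fun k _ => h j k))
      _ = 2 * (δ * (∑ k, N k) ^ 2) := by
        rw [sq, sum_mul_sum, mul_sum, mul_sum]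
        simp only [mul_sum, mul_assoc]
  rw [← hexpand, abs_mul, abs_two] at hbound
  linarith

theorem abs_dotProduct_mulVec_self_le_of_unit {s : ℕ} {Δ : Matrix ι ι ℝ} {δ : ℝ}
    (h : ∀ x : ι → ℝ, ∑ i, x i ^ 2 = 1 → IsSparse s x → |x ⬝ᵥ Δ *ᵥ x| ≤ δ)
    {v : ι → ℝ} (hv : IsSparse s v) : |v ⬝ᵥ Δ *ᵥ v| ≤ δ * ∑ i, v i ^ 2 := by
  have hnonneg : 0 ≤ ∑ i, v i ^ 2 := sum_nonneg fun i _ => sq_nonneg _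
  rcases hnonneg.eq_or_lt with h0 | hpos
  · simp [eq_zero_of_sum_sq_eq_zero h0.symm]
  set r := √(∑ i, v i ^ 2)
  have hr2 : r ^ 2 = ∑ i, v i ^ 2 := Real.sq_sqrt hnonneg
  have hr : r ≠ 0 := (Real.sqrt_pos.2 hpos).ne'
  have hunit : ∑ i, (r⁻¹ • v) i ^ 2 = 1 := by
    rw [sum_sq_smul, ← hr2, inv_pow, inv_mul_cancel₀ (pow_ne_zero 2 hr)]
  have hscale : v ⬝ᵥ Δ *ᵥ v = r ^ 2 * ((r⁻¹ • v) ⬝ᵥ Δ *ᵥ (r⁻¹ • v)) := by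
    rw [mulVec_smul, dotProduct_smul, smul_dotProduct, smul_eq_mul, smul_eq_mul]
    field_simp
  rw [hscale, abs_mul, abs_of_nonneg (sq_nonneg r), hr2, mul_comm]
  exact mul_le_mul_of_nonneg_right (h _ hunit (hv.smul _)) hnonneg

theorem abs_dotProduct_mulVec_add_le_of_isSparse {s t : ℕ} {Δ : Matrix ι ι ℝ} {δ : ℝ}
    (hΔ : ∀ x : ι → ℝ, IsSparse (s + t) x → |x ⬝ᵥ Δ *ᵥ x| ≤ δ * ∑ i, x i ^ 2)
    {u w : ι → ℝ} (hu : IsSparse s u) (hw : IsSparse t w) :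
    |u ⬝ᵥ Δ *ᵥ w + w ⬝ᵥ Δ *ᵥ u| ≤ 2 * δ * (√(∑ i, u i ^ 2) * √(∑ i, w i ^ 2)) := by
  have hpolar : ∀ {u w : ι → ℝ}, IsSparse s u → IsSparse t w →
      |u ⬝ᵥ Δ *ᵥ w + w ⬝ᵥ Δ *ᵥ u| ≤ δ * (∑ i, u i ^ 2 + ∑ i, w i ^ 2) := by
    intro u w hu hw
    have hdiff : 2 * (u ⬝ᵥ Δ *ᵥ w + w ⬝ᵥ Δ *ᵥ u)
        = (u + w) ⬝ᵥ Δ *ᵥ (u + w) - (u - w) ⬝ᵥ Δ *ᵥ (u - w) := by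
      simp only [mulVec_add, mulVec_sub, dotProduct_add, dotProduct_sub, add_dotProduct,
        sub_dotProduct]
      ring
    have hnorm : ∑ i, (u + w) i ^ 2 + ∑ i, (u - w) i ^ 2
        = 2 * (∑ i, u i ^ 2 + ∑ i, w i ^ 2) := by
      simp only [Pi.add_apply, Pi.sub_apply, ← sum_add_distrib, mul_sum]
      exact sum_congr rfl fun i _ => by ring
    have hsub := abs_sub ((u + w) ⬝ᵥ Δ *ᵥ (u + w)) ((u - w) ⬝ᵥ Δ *ᵥ (u - w))
    rw [← hdiff, abs_mul, abs_two] at hsub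
    have hplus := hΔ _ (hu.add hw)
    have hminus := hΔ _ (hu.sub hw)
    have hδnorm : δ * ∑ i, (u + w) i ^ 2 + δ * ∑ i, (u - w) i ^ 2
        = 2 * (δ * (∑ i, u i ^ 2 + ∑ i, w i ^ 2)) := by rw [← mul_add, hnorm]; ring
    linarith
  rcases (sum_nonneg fun i _ => sq_nonneg (u i)).eq_or_lt with hu0 | hupos
  · simp [eq_zero_of_sum_sq_eq_zero hu0.symm]
  rcases (sum_nonneg fun i _ => sq_nonneg (w i)).eq_or_lt with hw0 | hwpos
  · simp [eq_zero_of_sum_sq_eq_zero hw0.symm]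
  set a := √(∑ i, u i ^ 2)
  set b := √(∑ i, w i ^ 2)
  have hab : 0 < a * b := mul_pos (Real.sqrt_pos.2 hupos) (Real.sqrt_pos.2 hwpos)
  -- `b • u` and `a • w` have the same norm `a * b`, where AM-GM is sharp
  have hscaled := hpolar (hu.smul b) (hw.smul a)
  simp only [sum_sq_smul, mulVec_smul, dotProduct_smul, smul_dotProduct, smul_eq_mul] at hscaled
  rw [← Real.sq_sqrt hupos.le, ← Real.sq_sqrt hwpos.le,
    show ∀ x y : ℝ, a * (b * x) + b * (a * y) = a * b * (x + y) by intros; ring, abs_mul,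
    abs_of_pos hab] at hscaled
  exact le_of_mul_le_mul_left (hscaled.trans_eq (by ring)) hab

theorem abs_dotProduct_mulVec_self_le_of_isSparse {s : ℕ} (hs : 0 < s) {Δ : Matrix ι ι ℝ}
    {δ : ℝ} (hδ : 0 ≤ δ)
    (hΔ : ∀ x : ι → ℝ, IsSparse (2 * s) x → |x ⬝ᵥ Δ *ᵥ x| ≤ δ * ∑ i, x i ^ 2) (v : ι → ℝ) :
    |v ⬝ᵥ Δ *ᵥ v| ≤ 2 * δ * (∑ i, v i ^ 2 + (∑ i, |v i|) ^ 2 / s) := by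
  classical
  obtain ⟨n, a, ha, hsum, hnorm⟩ := exists_sparse_decomposition hs v univ
    (sum_nonneg fun i _ => abs_nonneg (v i))
    fun i _ => single_le_sum (fun j _ => abs_nonneg (v j)) (mem_univ i)
  rw [coe_univ, Set.indicator_univ] at hsum
  have hpair := abs_dotProduct_mulVec_sum_le Δ δ a (fun k => √(∑ i, a k i ^ 2)) fun j k =>
    abs_dotProduct_mulVec_add_le_of_isSparse (fun x hx => hΔ x (two_mul s ▸ hx)) (ha j) (ha k)
  rw [hsum] at hpair
  have hN : ∑ k, √(∑ i, a k i ^ 2) ≤ √(∑ i, v i ^ 2) + (∑ i, |v i|) / √s :=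
    hnorm.trans (by gcongr; exact min_le_right _ _)
  have hs' : (0 : ℝ) < s := by exact_mod_cast hs
  calc |v ⬝ᵥ Δ *ᵥ v| ≤ δ * (∑ k, √(∑ i, a k i ^ 2)) ^ 2 := hpair
    _ ≤ δ * (√(∑ i, v i ^ 2) + (∑ i, |v i|) / √s) ^ 2 := by gcongr
    _ ≤ δ * (2 * (∑ i, v i ^ 2 + (∑ i, |v i|) ^ 2 / s)) := by
        gcongr
        have hq : ((∑ i, |v i|) / √s) ^ 2 = (∑ i, |v i|) ^ 2 / s := by
          rw [div_pow, Real.sq_sqrt hs'.le]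
        nlinarith [sq_nonneg (√(∑ i, v i ^ 2) - (∑ i, |v i|) / √s),
          Real.sq_sqrt (by positivity : 0 ≤ ∑ i, v i ^ 2)]
    _ = 2 * δ * (∑ i, v i ^ 2 + (∑ i, |v i|) ^ 2 / s) := by ring

theorem lowerRE_of_sparse_approximation_general {q : ℕ} (Sx S : Matrix (Fin q) (Fin q) ℝ)
    (M₁ L : ℝ) (s : ℕ)
    (hM₁ : 0 < M₁) (hL : 27 < L) (hs : 0 < s)
    (heig : ∀ v : Fin q → ℝ, (1 / M₁) * (∑ i, v i ^ 2) ≤ v ⬝ᵥ Sx.mulVec v)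
    (hsparse : ∀ v : Fin q → ℝ, (∑ i, v i ^ 2 = 1) →
      ((Finset.univ.filter (fun i => v i ≠ 0)).card ≤ 2 * s) →
      |v ⬝ᵥ (S - Sx).mulVec v| ≤ 1 / (L * M₁)) :
    ∀ v : Fin q → ℝ,
      (1 / M₁) * (1 - 27 / L) * (∑ i, v i ^ 2)
          - (27 / (s * M₁ * L)) * (∑ i, |v i|) ^ 2
        ≤ v ⬝ᵥ S.mulVec v := by
  intro v
  have hδ : 0 ≤ 1 / (L * M₁) := by
    have : 0 < L := by linarith
    positivity
  have hdev := abs_dotProduct_mulVec_self_le_of_isSparse hs hδ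
    (fun _ => abs_dotProduct_mulVec_self_le_of_unit hsparse) v
  have hsplit : v ⬝ᵥ S *ᵥ v = v ⬝ᵥ Sx *ᵥ v + v ⬝ᵥ (S - Sx) *ᵥ v := by
    rw [sub_mulVec, dotProduct_sub]; ring
  have hpos : 0 ≤ 1 / (L * M₁) * (∑ i, v i ^ 2 + (∑ i, |v i|) ^ 2 / s) := by positivity
  have hconst : (1 / M₁) * (1 - 27 / L) * (∑ i, v i ^ 2) - (27 / (s * M₁ * L)) * (∑ i, |v i|) ^ 2
      = 1 / M₁ * (∑ i, v i ^ 2) - 27 * (1 / (L * M₁) * (∑ i, v i ^ 2 + (∑ i, |v i|) ^ 2 / s)) := by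
    field_simp
    ring
  rw [hconst]
  linarith [heig v, neg_abs_le (v ⬝ᵥ (S - Sx) *ᵥ v)]

/-- If the population covariance has smallest eigenvalue at least `1/M₁` and the
symmetric matrix `S` is close to it on all `2s`-sparse unit vectors, then `S`
satisfies the lower-RE condition with curvature `(1/M₁)(1 − 27/L)` and tolerance
`27/(s M₁ L)`. -/
theorem lowerRE_of_sparse_approximation {q : ℕ} (Sx S : Matrix (Fin q) (Fin q) ℝ)
    (hSx : Sx.IsSymm) (hS : S.IsSymm) (M₁ L : ℝ) (s : ℕ)
    (hM₁ : 0 < M₁) (hL : 27 < L) (hs : 0 < s)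
    (heig : ∀ v : Fin q → ℝ, (1 / M₁) * (∑ i, v i ^ 2) ≤ v ⬝ᵥ Sx.mulVec v)
    (hsparse : ∀ v : Fin q → ℝ, (∑ i, v i ^ 2 = 1) →
      ((Finset.univ.filter (fun i => v i ≠ 0)).card ≤ 2 * s) →
      |v ⬝ᵥ (S - Sx).mulVec v| ≤ 1 / (L * M₁)) :
    ∀ v : Fin q → ℝ,
      (1 / M₁) * (1 - 27 / L) * (∑ i, v i ^ 2)
          - (27 / (s * M₁ * L)) * (∑ i, |v i|) ^ 2
        ≤ v ⬝ᵥ S.mulVec v :=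
  lowerRE_of_sparse_approximation_general Sx S M₁ L s hM₁ hL hs heig hsparse
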